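/- arXiv:2605.27192 — 3 statements merged into one kernel-verified Lean document; each statement's English description precedes it below -/
import Mathlib

section
/- The distance lifting equals the coupling-based (Wasserstein-style) lifting: for any d : U × U' → [0,1], d̄(α,β) = inf { ev_f(F(d)(r)) | r ∈ F(U × U'), F(π_U)(r) = α and F(π_{U'})(r) = β }, where the infimum over the empty set is 1. -/
open unitInterval

instance : Fact ((0:ℝ) ≤ 1) := ⟨zero_le_one⟩

/-- Finite binary strings. -/
abbrev Word := List Bool

/-- A set of words is prefix-closed. -/
def PrefixClosed (U : Set Word) : Prop :=
  ∀ ⦃w : Word⦄, w ∈ U → ∀ ⦃v : Word⦄, v <+: w → v ∈ U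

/-- A set of words is sibling-closed. -/
def SiblingClosed (U : Set Word) : Prop :=
  ∀ w : Word, w ++ [false] ∈ U ↔ w ++ [true] ∈ U

/-- The distance lifting of `d` along the binary-tree functor
`F X = S0 ⊕ S2 × X × X`, induced by `f`. -/
def dlift {S0 S2 X Y : Type*} [DecidableEq S0] [DecidableEq S2]
    (f : I → I → I) (d : X → Y → I) :
    (S0 ⊕ S2 × X × X) → (S0 ⊕ S2 × Y × Y) → I
  | Sum.inl s, Sum.inl t => if s = t then 0 else 1
  | Sum.inr (s, x1, x2), Sum.inr (t, y1, y2) =>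
      if s = t then f (d x1 y1) (d x2 y2) else 1
  | _, _ => 1

/-- The relation lifting along the binary-tree functor. -/
def rlift {S0 S2 X Y : Type*} (R : X → Y → Prop) :
    (S0 ⊕ S2 × X × X) → (S0 ⊕ S2 × Y × Y) → Prop
  | Sum.inl s, Sum.inl t => s = t
  | Sum.inr (s, x1, x2), Sum.inr (t, y1, y2) => s = t ∧ R x1 y1 ∧ R x2 y2
  | _, _ => False

/-- The action of the binary-tree functor `F X = S0 ⊕ S2 × X × X` on maps. -/
def Fmap {S0 S2 X Y : Type*} (g : X → Y) : (S0 ⊕ S2 × X × X) → S0 ⊕ S2 × Y × Y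
  | Sum.inl s => Sum.inl s
  | Sum.inr (s, x1, x2) => Sum.inr (s, g x1, g x2)

/-- The evaluation map `ev_f : F [0,1] → [0,1]` induced by `f`. -/
def evf {S0 S2 : Type*} (f : I → I → I) : (S0 ⊕ S2 × I × I) → I
  | Sum.inl _ => 0
  | Sum.inr (_, r, r') => f r r'

/-- The distance lifting equals the coupling-based (Wasserstein-style) lifting:
`d̄(a,b)` is the infimum of `ev_f (F d r)` over couplings `r ∈ F(X×Y)`
projecting to `a` and `b` (the infimum over the empty set being `1 = ⊤`). -/
theorem stmt5 {S0 S2 X Y : Type*} [DecidableEq S0] [DecidableEq S2]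
    (f : I → I → I)
    (hf : ∀ x x' y y' : I, x ≤ x' → y ≤ y' → f x y ≤ f x' y')
    (d : X → Y → I) (a : S0 ⊕ S2 × X × X) (b : S0 ⊕ S2 × Y × Y) :
    dlift f d a b =
      sInf ((fun r => evf f (Fmap (fun p : X × Y => d p.1 p.2) r)) ''
        {r : S0 ⊕ S2 × (X × Y) × (X × Y) |
          Fmap Prod.fst r = a ∧ Fmap Prod.snd r = b}) := by
  have htop : (⊤ : I) = 1 := rfl
  cases a with
  | inl s =>
    cases b with
    | inl t =>
      by_cases h : s = t
      · subst h
        have hset : ((fun r => evf f (Fmap (fun p : X × Y => d p.1 p.2) r)) ''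
            {r : S0 ⊕ S2 × (X × Y) × (X × Y) |
              Fmap Prod.fst r = Sum.inl s ∧ Fmap Prod.snd r = Sum.inl s}) = {(0 : I)} := by
          ext v
          constructor
          · rintro ⟨r, ⟨h1, h2⟩, rfl⟩
            cases r with
            | inl u => simp [Fmap] at h1; subst h1; simp [evf, Fmap]
            | inr p => simp [Fmap] at h1
          · rintro rfl
            exact ⟨Sum.inl s, ⟨rfl, rfl⟩, rfl⟩
        rw [hset, sInf_singleton]
        simp [dlift]
      · have hset : ((fun r => evf f (Fmap (fun p : X × Y => d p.1 p.2) r)) ''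
            {r : S0 ⊕ S2 × (X × Y) × (X × Y) |
              Fmap Prod.fst r = Sum.inl s ∧ Fmap Prod.snd r = Sum.inl t}) = ∅ := by
          ext v
          simp only [Set.mem_image, Set.mem_setOf_eq, Set.mem_empty_iff_false, iff_false]
          rintro ⟨r, ⟨h1, h2⟩, rfl⟩
          cases r with
          | inl u => simp [Fmap] at h1 h2; exact h (h1 ▸ h2)
          | inr p => simp [Fmap] at h1
        rw [hset, sInf_empty, htop]
        simp [dlift, h]
    | inr q =>
      obtain ⟨t, y1, y2⟩ := q
      have hset : ((fun r => evf f (Fmap (fun p : X × Y => d p.1 p.2) r)) ''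
          {r : S0 ⊕ S2 × (X × Y) × (X × Y) |
            Fmap Prod.fst r = Sum.inl s ∧ Fmap Prod.snd r = Sum.inr (t, y1, y2)}) = ∅ := by
        ext v
        simp only [Set.mem_image, Set.mem_setOf_eq, Set.mem_empty_iff_false, iff_false]
        rintro ⟨r, ⟨h1, h2⟩, rfl⟩
        cases r with
        | inl u => simp [Fmap] at h2
        | inr p => simp [Fmap] at h1
      rw [hset, sInf_empty, htop]
      rfl
  | inr p =>
    obtain ⟨s, x1, x2⟩ := p
    cases b with
    | inl t =>
      have hset : ((fun r => evf f (Fmap (fun p : X × Y => d p.1 p.2) r)) ''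
          {r : S0 ⊕ S2 × (X × Y) × (X × Y) |
            Fmap Prod.fst r = Sum.inr (s, x1, x2) ∧ Fmap Prod.snd r = Sum.inl t}) = ∅ := by
        ext v
        simp only [Set.mem_image, Set.mem_setOf_eq, Set.mem_empty_iff_false, iff_false]
        rintro ⟨r, ⟨h1, h2⟩, rfl⟩
        cases r with
        | inl u => simp [Fmap] at h1
        | inr p => simp [Fmap] at h2
      rw [hset, sInf_empty, htop]
      rfl
    | inr q =>
      obtain ⟨t, y1, y2⟩ := q
      by_cases h : s = t
      · subst h
        have hset : ((fun r => evf f (Fmap (fun p : X × Y => d p.1 p.2) r)) ''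
            {r : S0 ⊕ S2 × (X × Y) × (X × Y) |
              Fmap Prod.fst r = Sum.inr (s, x1, x2) ∧ Fmap Prod.snd r = Sum.inr (s, y1, y2)}) =
            {f (d x1 y1) (d x2 y2)} := by
          ext v
          constructor
          · rintro ⟨r, ⟨h1, h2⟩, rfl⟩
            cases r with
            | inl u => simp [Fmap] at h1
            | inr p =>
              obtain ⟨u, p1, p2⟩ := p
              simp only [Fmap, Sum.inr.injEq, Prod.mk.injEq] at h1 h2
              obtain ⟨rfl, h1a, h1b⟩ := h1
              obtain ⟨-, h2a, h2b⟩ := h2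
              simp [evf, Fmap, ← h1a, ← h1b, ← h2a, ← h2b]
          · rintro rfl
            exact ⟨Sum.inr (s, (x1, y1), (x2, y2)), ⟨rfl, rfl⟩, rfl⟩
        rw [hset, sInf_singleton]
        simp [dlift]
      · have hset : ((fun r => evf f (Fmap (fun p : X × Y => d p.1 p.2) r)) ''
            {r : S0 ⊕ S2 × (X × Y) × (X × Y) |
              Fmap Prod.fst r = Sum.inr (s, x1, x2) ∧ Fmap Prod.snd r = Sum.inr (t, y1, y2)}) = ∅ := by
          ext v
          simp only [Set.mem_image, Set.mem_setOf_eq, Set.mem_empty_iff_false, iff_false]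
          rintro ⟨r, ⟨h1, h2⟩, rfl⟩
          cases r with
          | inl u => simp [Fmap] at h1
          | inr p =>
            obtain ⟨u, p1, p2⟩ := p
            simp only [Fmap, Sum.inr.injEq, Prod.mk.injEq] at h1 h2
            exact h (h1.1 ▸ h2.1)
        rw [hset, sInf_empty, htop]
        simp [dlift, h]
end

section
/- The pointwise infimum of all bisimulation distance functions is itself a bisimulation distance function, provided the lifting function f is monotone and continuous in the sense that it preserves infima of directed (or all) families in each argument; in particular, for f(x,y) = ½x + ½y, the infimum d*(w,w') = inf { d(w,w') | d a bisimulation distance } is a bisimulation distance function. -/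
open unitInterval

/-- A labelled binary tree: a prefix- and sibling-closed domain of words
containing the root, together with its successor function
`γ : U → S0 ⊕ S2 × U × U` sending a branching node to its label and
its two children. -/
structure LTree (S0 S2 : Type*) where
  U : Set Word
  prefixClosed : PrefixClosed U
  siblingClosed : SiblingClosed U
  rootMem : ([] : Word) ∈ U
  γ : U → S0 ⊕ S2 × U × U
  γ_children : ∀ (w : U) (s : S2) (l r : U),
      γ w = Sum.inr (s, l, r) →
      (l : Word) = (w : Word) ++ [false] ∧ (r : Word) = (w : Word) ++ [true]

/-- The root of a labelled binary tree, as an element of its domain. -/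
def LTree.root {S0 S2 : Type*} (T : LTree S0 S2) : T.U := ⟨[], T.rootMem⟩

/-- `d` is a bisimulation distance function between `T` and `T'`:
`d(w,w') ≥ d̄(γ w, γ' w')` for all `w, w'`. -/
def IsBisimDist {S0 S2 : Type*} [DecidableEq S0] [DecidableEq S2]
    (f : I → I → I) (T T' : LTree S0 S2) (d : T.U → T'.U → I) : Prop :=
  ∀ (w : T.U) (w' : T'.U), dlift f d (T.γ w) (T'.γ w') ≤ d w w'

/-- The bisimulation distance: the greatest post-fixpoint of the lifted
functional in the pointwise reverse order, i.e. (by the Knaster–Tarski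
formula) the pointwise infimum of all bisimulation distance functions. -/
noncomputable def dstar {S0 S2 : Type*} [DecidableEq S0] [DecidableEq S2]
    (f : I → I → I) (T T' : LTree S0 S2) (w : T.U) (w' : T'.U) : I :=
  ⨅ d : {d : T.U → T'.U → I // IsBisimDist f T T' d}, d.1 w w'

/-- Winning positions for Verifier in the bisimulation distance game:
`p` is winning iff it belongs to some set `S` of positions at each of which
Verifier has a valid move `d` (i.e. `d̄(γ w, γ' w') ≤ ε`) all of whose
Falsifier responses `(v,v',ε')` with `d v v' ≤ ε'` stay in `S`
(stuck players lose, infinite plays are won by Verifier). -/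
def BDWin {S0 S2 : Type*} [DecidableEq S0] [DecidableEq S2]
    (f : I → I → I) (T T' : LTree S0 S2) (p : T.U × T'.U × I) : Prop :=
  ∃ S : Set (T.U × T'.U × I), p ∈ S ∧
    ∀ q ∈ S, ∃ d : T.U → T'.U → I,
      dlift f d (T.γ q.1) (T'.γ q.2.1) ≤ q.2.2 ∧
      ∀ (v : T.U) (v' : T'.U) (ε' : I), d v v' ≤ ε' → (v, v', ε') ∈ S

/-- The lifting function `f(x,y) = ½x + ½y` on the unit interval. -/
noncomputable def halfAdd (x y : I) : I :=
  ⟨(x : ℝ) / 2 + (y : ℝ) / 2,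
    Set.mem_Icc.mpr ⟨by nlinarith [unitInterval.nonneg x, unitInterval.nonneg y],
      by nlinarith [unitInterval.le_one x, unitInterval.le_one y]⟩⟩


lemma dlift_mono {S0 S2 X Y : Type*} [DecidableEq S0] [DecidableEq S2]
    {f : I → I → I}
    (hf : ∀ x x' y y' : I, x ≤ x' → y ≤ y' → f x y ≤ f x' y')
    {d d' : X → Y → I} (h : ∀ x y, d x y ≤ d' x y) :
    ∀ a b, dlift (S0 := S0) (S2 := S2) f d a b ≤ dlift f d' a b := by
  intro a b
  cases a with
  | inl s => cases b with
    | inl t => simp [dlift]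
    | inr p => simp [dlift]
  | inr p => cases b with
    | inl t => simp [dlift]
    | inr q =>
      obtain ⟨s, x1, x2⟩ := p
      obtain ⟨t, y1, y2⟩ := q
      by_cases hst : s = t
      · simp [dlift, hst]
        exact hf _ _ _ _ (h x1 y1) (h x2 y2)
      · simp [dlift, hst]

lemma bisim_dstar {S0 S2 : Type*} [DecidableEq S0] [DecidableEq S2]
    (f : I → I → I)
    (hf : ∀ x x' y y' : I, x ≤ x' → y ≤ y' → f x y ≤ f x' y')
    (T T' : LTree S0 S2) :
    IsBisimDist f T T' (fun w w' => dstar f T T' w w') := by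
  intro w w'
  apply le_iInf
  rintro ⟨d, hd⟩
  calc dlift f (fun v v' => dstar f T T' v v') (T.γ w) (T'.γ w')
      ≤ dlift f d (T.γ w) (T'.γ w') := by
        apply dlift_mono hf
        intro v v'
        exact iInf_le (fun d : {d // IsBisimDist f T T' d} => d.1 v v') ⟨d, hd⟩
    _ ≤ d w w' := hd w w'

/-- The pointwise infimum of all bisimulation distance functions is itself a
bisimulation distance function, provided `f` is monotone and preserves
(nonempty) infima in each argument; in particular this holds for
`f(x,y) = ½x + ½y`. -/
theorem stmt7 {S0 S2 : Type*} [DecidableEq S0] [DecidableEq S2]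
    (T T' : LTree S0 S2) :
    (∀ f : I → I → I,
      (∀ x x' y y' : I, x ≤ x' → y ≤ y' → f x y ≤ f x' y') →
      (∀ (y : I) (s : Set I), s.Nonempty →
        f (sInf s) y = sInf ((fun x => f x y) '' s)) →
      (∀ (x : I) (s : Set I), s.Nonempty →
        f x (sInf s) = sInf ((fun y => f x y) '' s)) →
      IsBisimDist f T T' (fun w w' => dstar f T T' w w')) ∧
    IsBisimDist halfAdd T T' (fun w w' => dstar halfAdd T T' w w') := by
  constructor
  · intro f hf _ _
    exact bisim_dstar f hf T T'
  · refine bisim_dstar halfAdd ?_ T T'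
    intro x x' y y' hx hy
    simp only [halfAdd, Subtype.mk_le_mk]
    have hx' : (x:ℝ) ≤ x' := hx
    have hy' : (y:ℝ) ≤ y' := hy
    linarith
end

section
/- If T' is accepted by a deadlock-free tree automaton A (Verifier wins the acceptance game from (a₀, root')) and the bisimulation distance between T' and T is at most ε₀, then T is ε₀-accepted by A (Verifier wins the ε-acceptance game from (a₀, root, ε₀)). More strongly: for all a ∈ A, w ∈ U, w' ∈ U', if (a,w') is winning in the acceptance game on T' and (w',w,ε) is winning in the bisimulation distance game between T' and T, then (a,w,ε) is winning in the ε-acceptance game on T. -/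
open unitInterval

/-- A nondeterministic tree automaton (with acceptance condition `Acc = A^ω`,
i.e. every infinite run accepted). -/
structure NTA (S0 S2 : Type*) where
  A : Type*
  a0 : A
  Δ : A → Set (S0 ⊕ S2 × A × A)

/-- Deadlock freeness: every state has at least one transition. -/
def NTA.DeadlockFree {S0 S2 : Type*} (𝔸 : NTA S0 S2) : Prop :=
  ∀ a : 𝔸.A, (𝔸.Δ a).Nonempty

/-- Winning positions for Verifier in the (Boolean) acceptance game:
at `(a,w)` Verifier picks `δa ∈ Δ a` and a relation `R` with
`(δa, γ w) ∈ R̄`; Falsifier picks an element of `R`; infinite plays are won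
by Verifier. -/
def AccWin {S0 S2 : Type*} (𝔸 : NTA S0 S2) (T : LTree S0 S2)
    (p : 𝔸.A × T.U) : Prop :=
  ∃ S : Set (𝔸.A × T.U), p ∈ S ∧
    ∀ q ∈ S, ∃ δa ∈ 𝔸.Δ q.1, ∃ R : 𝔸.A → T.U → Prop,
      rlift R δa (T.γ q.2) ∧ ∀ (b : 𝔸.A) (v : T.U), R b v → (b, v) ∈ S

/-- Winning positions for Verifier in the ε-acceptance game:
at `(a,w,ε)` Verifier picks `δa ∈ Δ a` and `d : A × U → [0,1]` with
`d̄(δa, γ w) ≤ ε`; Falsifier picks `(b,v,ε')` with `d b v ≤ ε'`;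
infinite plays are won by Verifier. -/
def EAccWin {S0 S2 : Type*} [DecidableEq S0] [DecidableEq S2]
    (f : I → I → I) (𝔸 : NTA S0 S2) (T : LTree S0 S2)
    (p : 𝔸.A × T.U × I) : Prop :=
  ∃ S : Set (𝔸.A × T.U × I), p ∈ S ∧
    ∀ q ∈ S, ∃ δa ∈ 𝔸.Δ q.1, ∃ d : 𝔸.A → T.U → I,
      dlift f d δa (T.γ q.2.1) ≤ q.2.2 ∧
      ∀ (b : 𝔸.A) (v : T.U) (ε' : I), d b v ≤ ε' → (b, v, ε') ∈ S

/-- If `T'` is accepted by a deadlock-free automaton and the bisimulation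
distance game position `(root', root, ε₀)` is winning, then `T` is
ε₀-accepted; more strongly, for all `a, w, w'`: if `(a,w')` is winning in the
acceptance game on `T'` and `(w',w,ε)` is winning in the bisimulation distance
game between `T'` and `T`, then `(a,w,ε)` is winning in the ε-acceptance game
on `T`. -/
theorem stmt15 {S0 S2 : Type*} [DecidableEq S0] [DecidableEq S2]
    (f : I → I → I)
    (hf : ∀ x x' y y' : I, x ≤ x' → y ≤ y' → f x y ≤ f x' y')
    (𝔸 : NTA S0 S2) (hdf : 𝔸.DeadlockFree) (T T' : LTree S0 S2) :
    (∀ ε0 : I, AccWin 𝔸 T' (𝔸.a0, T'.root) →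
        BDWin f T' T (T'.root, T.root, ε0) →
        EAccWin f 𝔸 T (𝔸.a0, T.root, ε0)) ∧
    (∀ (a : 𝔸.A) (w : T.U) (w' : T'.U) (ε : I),
        AccWin 𝔸 T' (a, w') → BDWin f T' T (w', w, ε) →
        EAccWin f 𝔸 T (a, w, ε)) := by
  classical
  have main : ∀ (a : 𝔸.A) (w : T.U) (w' : T'.U) (ε : I),
      AccWin 𝔸 T' (a, w') → BDWin f T' T (w', w, ε) →
      EAccWin f 𝔸 T (a, w, ε) := by
    rintro a w w' ε ⟨S1, hm1, hS1⟩ ⟨S2, hm2, hS2⟩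
    refine ⟨{q | q.2.2 = 1 ∨ ∃ v', (q.1, v') ∈ S1 ∧ (v', q.2.1, q.2.2) ∈ S2},
      Or.inr ⟨w', hm1, hm2⟩, ?_⟩
    rintro ⟨b, v, εb⟩ (h1 | ⟨v', hv1, hv2⟩)
    · obtain rfl : εb = 1 := h1
      obtain ⟨δb, hδb⟩ := hdf b
      refine ⟨δb, hδb, fun _ _ => 1, le_one', ?_⟩
      intro c u ε'' h
      exact Or.inl (le_antisymm le_one' h)
    · obtain ⟨δb, hδb, R, hR, hRc⟩ := hS1 (b, v') hv1
      obtain ⟨d', hd', hd'c⟩ := hS2 (v', v, εb) hv2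
      have hR' : rlift R δb (T'.γ v') := hR
      have hd'' : dlift f d' (T'.γ v') (T.γ v) ≤ εb := hd'
      rcases hδ : δb with s | ⟨s, b1, b2⟩ <;> subst hδ <;>
        rcases hg' : T'.γ v' with s' | ⟨s', l', r'⟩ <;>
          rw [hg'] at hR' hd'' <;>
            simp only [rlift] at hR'
      · -- δb = inl s, γ' v' = inl s'
        subst hR'
        refine ⟨Sum.inl s, hδb, fun _ _ => 1, ?_, ?_⟩
        · show dlift f (fun _ _ => 1) (Sum.inl s) (T.γ v) ≤ εb
          rcases hg : T.γ v with t | ⟨t, l, r⟩ <;> rw [hg] at hd'' <;>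
            simpa [dlift] using hd''
        · intro c u ε'' h
          exact Or.inl (le_antisymm le_one' h)
      · -- δb = inr (s,b1,b2), γ' v' = inr (s',l',r')
        obtain ⟨rfl, hRl, hRr⟩ := hR'
        rcases hg : T.γ v with t | ⟨t, l, r⟩
        · rw [hg] at hd''
          refine ⟨Sum.inr (s, b1, b2), hδb, fun _ _ => 1, ?_, ?_⟩
          · simpa [dlift] using hd''
          · intro c u ε'' h
            exact Or.inl (le_antisymm le_one' h)
        · rw [hg] at hd''
          refine ⟨Sum.inr (s, b1, b2), hδb,
            fun c u => min (if c = b1 ∧ u = l then d' l' u else 1)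
                           (if c = b2 ∧ u = r then d' r' u else 1), ?_, ?_⟩
          · simp only [dlift] at hd'' ⊢
            by_cases hst : s = t
            · rw [if_pos hst] at hd'' ⊢
              refine le_trans (hf _ _ _ _ ?_ ?_) hd''
              · exact min_le_of_left_le (by simp)
              · exact min_le_of_right_le (by simp)
            · rw [if_neg hst] at hd'' ⊢
              exact hd''
          · intro c u ε'' h
            rcases min_le_iff.mp h with hA | hA
            · by_cases hc : c = b1 ∧ u = l
              · rw [if_pos hc] at hA
                obtain ⟨rfl, rfl⟩ := hc
                exact Or.inr ⟨l', hRc _ l' hRl, hd'c l' u ε'' hA⟩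
              · rw [if_neg hc] at hA
                exact Or.inl (le_antisymm le_one' hA)
            · by_cases hc : c = b2 ∧ u = r
              · rw [if_pos hc] at hA
                obtain ⟨rfl, rfl⟩ := hc
                exact Or.inr ⟨r', hRc _ r' hRr, hd'c r' u ε'' hA⟩
              · rw [if_neg hc] at hA
                exact Or.inl (le_antisymm le_one' hA)
  exact ⟨fun ε0 => main 𝔸.a0 T.root T'.root ε0, main⟩
end
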